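/- Let N ≥ 2, let f ∈ C²((0, +∞)), and let φ(x) = x_N·f(|x|) for x ∈ ℝ^N_+. Fix x ∈ ℝ^N_+ and set b = x_N·(f″(|x|) − f′(|x|)/|x|), c = f′(|x|), d = x_N·f′(|x|)/|x|, and s = x_N/|x|. Then the eigenvalues of the Hessian D²φ(x), listed in nondecreasing order with multiplicity, are: λ₁(D²φ(x)) = d + (b + 2cs − √((b + 2cs)² + 4c²(1 − s²)))/2, λ₂(D²φ(x)) = ⋯ = λ_{N−1}(D²φ(x)) = d, and λ_N(D²φ(x)) = d + (b + 2cs + √((b + 2cs)² + 4c²(1 − s²)))/2. Moreover d is an eigenvalue whose eigenspace contains the orthogonal complement of span{e_N, x}. -/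

import Mathlib

open scoped BigOperators

/-- The eigenvalues of a symmetric real matrix, listed in nondecreasing order with
multiplicity (junk value `0` if the matrix is not Hermitian). -/
noncomputable def sortedEig {n : ℕ} (A : Matrix (Fin n) (Fin n) ℝ) : Fin n → ℝ :=
  if h : A.IsHermitian then h.eigenvalues ∘ Tuple.sort h.eigenvalues else 0

/-- `P⁻_k(A)`: the sum of the `k` smallest eigenvalues of `A`. -/
noncomputable def Pminus {n : ℕ} (k : ℕ) (A : Matrix (Fin n) (Fin n) ℝ) : ℝ :=
  ∑ i : Fin n, if (i : ℕ) < k then sortedEig A i else 0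

/-- `P⁺_k(A)`: the sum of the `k` largest eigenvalues of `A`. -/
noncomputable def Pplus {n : ℕ} (k : ℕ) (A : Matrix (Fin n) (Fin n) ℝ) : ℝ :=
  ∑ i : Fin n, if n - k ≤ (i : ℕ) then sortedEig A i else 0

/-- The Hessian matrix `D²u(x)` of `u : ℝ^N → ℝ` at `x`. -/
noncomputable def hessianMatrix {N : ℕ} (u : EuclideanSpace ℝ (Fin N) → ℝ)
    (x : EuclideanSpace ℝ (Fin N)) : Matrix (Fin N) (Fin N) ℝ :=
  fun i j => iteratedFDeriv ℝ 2 u x ![EuclideanSpace.single i 1, EuclideanSpace.single j 1]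

/-- `u` is a viscosity supersolution of `F(D²u) + g(u) = 0` in `Ω`. -/
def IsViscositySupersolution {N : ℕ} (F : Matrix (Fin N) (Fin N) ℝ → ℝ) (g : ℝ → ℝ)
    (Ω : Set (EuclideanSpace ℝ (Fin N))) (u : EuclideanSpace ℝ (Fin N) → ℝ) : Prop :=
  ∀ x₀ ∈ Ω, ∀ φ : EuclideanSpace ℝ (Fin N) → ℝ, ContDiff ℝ 2 φ →
    IsLocalMinOn (fun x => u x - φ x) Ω x₀ →
      F (hessianMatrix φ x₀) + g (u x₀) ≤ 0

/-- `u` is a viscosity subsolution of `F(D²u) + g(u) = 0` in `Ω`. -/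
def IsViscositySubsolution {N : ℕ} (F : Matrix (Fin N) (Fin N) ℝ → ℝ) (g : ℝ → ℝ)
    (Ω : Set (EuclideanSpace ℝ (Fin N))) (u : EuclideanSpace ℝ (Fin N) → ℝ) : Prop :=
  ∀ x₀ ∈ Ω, ∀ φ : EuclideanSpace ℝ (Fin N) → ℝ, ContDiff ℝ 2 φ →
    IsLocalMaxOn (fun x => u x - φ x) Ω x₀ →
      0 ≤ F (hessianMatrix φ x₀) + g (u x₀)

/-- `u` is a viscosity solution of `F(D²u) + g(u) = 0` in `Ω`. -/
def IsViscositySolution {N : ℕ} (F : Matrix (Fin N) (Fin N) ℝ → ℝ) (g : ℝ → ℝ)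
    (Ω : Set (EuclideanSpace ℝ (Fin N))) (u : EuclideanSpace ℝ (Fin N) → ℝ) : Prop :=
  IsViscositySubsolution F g Ω u ∧ IsViscositySupersolution F g Ω u

/-!
With `r = ‖x‖` and `e = e_N`, differentiating `φ` twice gives
`D²φ(x) = d • 1 + (b / r²) x xᵀ + (c / r) (e xᵀ + x eᵀ) = d • 1 + U V` with `U` of size `N × 2`.
Since `X ^ 2 χ(U V) = X ^ N χ(V U)`, the characteristic polynomial is `(X - d) ^ (N - 2)` times
`χ(V U)` evaluated at `X - d`. The `2 × 2` matrix `V U` has trace `b + 2 c s` and determinant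
`-c² (1 - s²) ≤ 0`, so the two remaining eigenvalues lie on either side of `d`, which fixes their
order. The rank-two part `U V` vanishes on vectors orthogonal to both `x` and `e`.
-/

open Polynomial Matrix
open scoped RealInnerProductSpace

theorem sortedEig_eq_of_charpoly_eq_prod {n : ℕ} {A : Matrix (Fin n) (Fin n) ℝ}
    (hA : A.IsHermitian) {μ : Fin n → ℝ} (hμ : Monotone μ)
    (h : A.charpoly = ∏ i, (X - C (μ i))) : sortedEig A = μ := by
  rw [sortedEig, dif_pos hA]
  have roots_eq (g : Fin n → ℝ) : (∏ i, (X - C (g i))).roots = Finset.univ.val.map g := by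
    simp [roots_prod, Finset.prod_ne_zero_iff, X_sub_C_ne_zero]
  have hroots := congrArg roots (hA.charpoly_eq.symm.trans h)
  simp only [RCLike.ofReal_real_eq_id, id, roots_eq] at hroots
  rw [Fin.univ_val_map, Fin.univ_val_map, Multiset.coe_eq_coe] at hroots
  exact List.ofFn_injective <| List.Perm.eq_of_sortedLE (Tuple.monotone_sort _).sortedLE_ofFn
    hμ.sortedLE_ofFn ((Equiv.Perm.ofFn_comp_perm _ _).trans hroots)

theorem sortedEig_eq_of_charpoly_eq {N : ℕ} (hN : 2 ≤ N) {A : Matrix (Fin N) (Fin N) ℝ}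
    (hA : A.IsHermitian) {l m h : ℝ} (hlm : l ≤ m) (hmh : m ≤ h)
    (hchar : A.charpoly = (X - C l) * (X - C h) * (X - C m) ^ (N - 2)) :
    sortedEig A = fun i : Fin N => if (i : ℕ) = 0 then l else if (i : ℕ) = N - 1 then h else m := by
  refine sortedEig_eq_of_charpoly_eq_prod hA (fun i j hij => ?_) ?_
  · have hij : (i : ℕ) ≤ j := hij
    split_ifs <;> first | rfl | linarith | omega
  · obtain ⟨n, rfl⟩ : ∃ n, N = n + 2 := ⟨N - 2, by omega⟩
    rw [hchar, Fin.prod_univ_succ, Fin.prod_univ_castSucc]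
    have hne (i : Fin n) : (i : ℕ) ≠ n := i.isLt.ne
    simp only [add_tsub_cancel_right, Fin.coe_ofNat_eq_mod, Nat.zero_mod, ↓reduceIte,
      Fin.val_succ, Fin.val_castSucc, Nat.add_eq_zero_iff, one_ne_zero, and_false,
      Nat.add_one_sub_one, Nat.add_right_cancel_iff, hne, Finset.prod_const, Finset.card_univ,
      Fintype.card_fin, Fin.succ_last, Nat.succ_eq_add_one, Fin.val_last]
    ring

theorem sq_sub_mul_sub_eq_mul_sub_mul_sub {d T D q : ℝ} (hq : q ^ 2 = T ^ 2 + 4 * D) :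
    (X - C d) ^ 2 - C T * (X - C d) - C D
      = (X - C (d + (T - q) / 2)) * (X - C (d + (T + q) / 2)) := by
  have hvieta (p p' : ℝ) : (X - C p) * (X - C p') = X ^ 2 - C (p + p') * X + C (p * p') := by
    simp only [map_add, map_mul]
    ring
  rw [hvieta, show d + (T - q) / 2 + (d + (T + q) / 2) = 2 * d + T by ring,
    show (d + (T - q) / 2) * (d + (T + q) / 2) = d ^ 2 + T * d - D by
      linear_combination (-1 / 4 : ℝ) * hq]
  simp only [map_add, map_sub, map_mul, map_pow, map_ofNat]
  ring

theorem sortedEig_eq_of_charpoly_eq_shifted_quadratic {N : ℕ} (hN : 2 ≤ N)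
    {A : Matrix (Fin N) (Fin N) ℝ} (hA : A.IsHermitian) {d T D : ℝ} (hD : 0 ≤ D)
    (hchar : A.charpoly = (X - C d) ^ (N - 2) * ((X - C d) ^ 2 - C T * (X - C d) - C D)) :
    sortedEig A = fun i : Fin N =>
      if (i : ℕ) = 0 then d + (T - √(T ^ 2 + 4 * D)) / 2
      else if (i : ℕ) = N - 1 then d + (T + √(T ^ 2 + 4 * D)) / 2 else d := by
  have hdisc : 0 ≤ T ^ 2 + 4 * D := by positivity
  have hT : |T| ≤ √(T ^ 2 + 4 * D) := Real.abs_le_sqrt (by linarith)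
  refine sortedEig_eq_of_charpoly_eq hN hA (by linarith [le_abs_self T])
    (by linarith [neg_abs_le T]) ?_
  rw [hchar, sq_sub_mul_sub_eq_mul_sub_mul_sub (Real.sq_sqrt hdisc)]
  ring

theorem charpoly_scalar_add_mul_of_le {n m R : Type*} [Fintype n] [DecidableEq n] [Fintype m]
    [DecidableEq m] [CommRing R] (d : R) (U : Matrix n m R) (V : Matrix m n R)
    (hle : Fintype.card m ≤ Fintype.card n) :
    (scalar n d + U * V).charpoly
      = (X - C d) ^ (Fintype.card n - Fintype.card m) * (V * U).charpoly.comp (X - C d) := by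
  have h := charpoly_mul_comm_of_le U V hle
  rw [← add_sub_cancel_left (scalar n d) (U * V), charpoly_sub_scalar] at h
  have := congrArg (fun p => p.comp (X - C d)) h
  simpa [comp_assoc, mul_comp] using this

section SymmRankTwoUpdate

variable {n R : Type*} [Fintype n] [DecidableEq n] [CommRing R]

def symmRankTwoUpdate (d α β : R) (x a : n → R) : Matrix n n R :=
  scalar n d + α • vecMulVec x x + β • (vecMulVec a x + vecMulVec x a)

variable (d α β : R) (x a : n → R)

theorem isSymm_symmRankTwoUpdate : (symmRankTwoUpdate d α β x a).IsSymm :=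
  IsSymm.ext fun i j => by
    simp only [symmRankTwoUpdate, scalar_apply, Matrix.add_apply, Matrix.smul_apply,
      vecMulVec_apply, diagonal_apply, eq_comm (a := i), smul_eq_mul]
    ring

theorem symmRankTwoUpdate_eq_scalar_add_mul :
    symmRankTwoUpdate d α β x a
      = scalar n d + (of ![x, a])ᵀ * of ![α • x + β • a, β • x] := by
  ext i j
  simp only [symmRankTwoUpdate, scalar_apply, Matrix.add_apply, Matrix.smul_apply, smul_eq_mul,
    vecMulVec_apply, mul_apply, transpose_apply, of_apply, Fin.sum_univ_two, cons_val_zero,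
    cons_val_one, Pi.add_apply, Pi.smul_apply]
  ring

theorem charpoly_symmRankTwoUpdate [Nontrivial R] (hn : 2 ≤ Fintype.card n) :
    (symmRankTwoUpdate d α β x a).charpoly
      = (X - C d) ^ (Fintype.card n - 2) * ((X - C d) ^ 2
          - C (α * (x ⬝ᵥ x) + 2 * β * (x ⬝ᵥ a)) * (X - C d)
          - C (β ^ 2 * ((x ⬝ᵥ x) * (a ⬝ᵥ a) - (x ⬝ᵥ a) ^ 2))) := by
  have hVU : of ![α • x + β • a, β • x] * (of ![x, a])ᵀ
      = !![α * (x ⬝ᵥ x) + β * (x ⬝ᵥ a), α * (x ⬝ᵥ a) + β * (a ⬝ᵥ a);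
          β * (x ⬝ᵥ x), β * (x ⬝ᵥ a)] := by
    ext i j
    fin_cases i <;> fin_cases j <;>
      simp [mul_apply, dotProduct, add_mul, mul_assoc, Finset.sum_add_distrib, Finset.mul_sum,
        mul_comm (a _)]
  rw [symmRankTwoUpdate_eq_scalar_add_mul, charpoly_scalar_add_mul_of_le _ _ _
    (by simpa using hn), Fintype.card_fin, hVU, charpoly_fin_two, trace_fin_two_of,
    det_fin_two_of]
  simp only [sub_comp, add_comp, mul_comp, pow_comp, X_comp, C_comp, map_add, map_sub, map_mul,
    map_pow, map_ofNat]
  ring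

theorem symmRankTwoUpdate_mulVec_of_dotProduct_eq_zero {v : n → R} (hx : x ⬝ᵥ v = 0)
    (ha : a ⬝ᵥ v = 0) : symmRankTwoUpdate d α β x a *ᵥ v = d • v := by
  simp [symmRankTwoUpdate, add_mulVec, smul_mulVec, vecMulVec_mulVec, hx, ha, scalar_apply]

end SymmRankTwoUpdate

section Radial

variable {E : Type*} [NormedAddCommGroup E] [InnerProductSpace ℝ E]

theorem hasFDerivAt_norm_of_ne_zero {x : E} (hx : x ≠ 0) :
    HasFDerivAt (‖·‖) (‖x‖⁻¹ • innerSL ℝ x) x := by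
  have hsqrt := (Real.hasDerivAt_sqrt (pow_ne_zero 2 (norm_ne_zero_iff.2 hx))).comp_hasFDerivAt
    x (hasStrictFDerivAt_norm_sq x).hasFDerivAt
  simp only [Function.comp_def, Real.sqrt_sq (norm_nonneg _)] at hsqrt
  refine hsqrt.congr_fderiv ?_
  ext v
  simp only [_root_.smul_apply, coe_innerSL_apply, nsmul_eq_mul, smul_eq_mul]
  ring

theorem HasDerivAt.hasFDerivAt_comp_norm {g : ℝ → ℝ} {g' : ℝ} {x : E} (hx : x ≠ 0)
    (hg : HasDerivAt g g' ‖x‖) : HasFDerivAt (fun y => g ‖y‖) ((g' / ‖x‖) • innerSL ℝ x) x := by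
  refine (hg.comp_hasFDerivAt x (hasFDerivAt_norm_of_ne_zero hx)).congr_fderiv ?_
  rw [smul_smul, div_eq_mul_inv]

variable {f f' f'' : ℝ → ℝ} (hf : ∀ r, 0 < r → HasDerivAt f (f' r) r)
include hf

theorem hasFDerivAt_inner_mul_comp_norm (a : E) {y : E} (hy : y ≠ 0) :
    HasFDerivAt (fun z => ⟪a, z⟫ * f ‖z‖)
      (f ‖y‖ • innerSL ℝ a + (⟪a, y⟫ * (f' ‖y‖ / ‖y‖)) • innerSL ℝ y) y := by
  refine (((innerSL ℝ a).hasFDerivAt).mul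
    ((hf _ (norm_pos_iff.2 hy)).hasFDerivAt_comp_norm hy)).congr_fderiv ?_
  ext v
  simp only [coe_innerSL_apply, _root_.add_apply, _root_.smul_apply, smul_eq_mul]
  ring

theorem iteratedFDeriv_two_inner_mul_comp_norm (a : E)
    (hf' : ∀ r, 0 < r → HasDerivAt f' (f'' r) r) {x : E} (hx : x ≠ 0) (u v : E) :
    iteratedFDeriv ℝ 2 (fun z => ⟪a, z⟫ * f ‖z‖) x ![u, v]
      = ⟪a, x⟫ * f' ‖x‖ / ‖x‖ * ⟪u, v⟫
        + ⟪a, x⟫ * (f'' ‖x‖ - f' ‖x‖ / ‖x‖) / ‖x‖ ^ 2 * (⟪x, u⟫ * ⟪x, v⟫)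
        + f' ‖x‖ / ‖x‖ * (⟪a, u⟫ * ⟪x, v⟫ + ⟪a, v⟫ * ⟪x, u⟫) := by
  have hr : 0 < ‖x‖ := norm_pos_iff.2 hx
  have hfderiv : fderiv ℝ (fun z => ⟪a, z⟫ * f ‖z‖) =ᶠ[nhds x]
      fun y => f ‖y‖ • innerSL ℝ a + (⟪a, y⟫ * (f' ‖y‖ / ‖y‖)) • innerSL ℝ y := by
    filter_upwards [eventually_ne_nhds hx] with y hy
    exact (hasFDerivAt_inner_mul_comp_norm hf a hy).fderiv
  have hquot : HasDerivAt (fun r => f' r / r) ((f'' ‖x‖ * ‖x‖ - f' ‖x‖ * 1) / ‖x‖ ^ 2) ‖x‖ :=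
    (hf' _ hr).div (hasDerivAt_id _) hr.ne'
  have hsecond : HasFDerivAt
      (fun y => f ‖y‖ • innerSL ℝ a + (⟪a, y⟫ * (f' ‖y‖ / ‖y‖)) • innerSL ℝ y) _ x :=
    (((hf _ hr).hasFDerivAt_comp_norm hx).smul_const (innerSL ℝ a)).add
      ((((innerSL ℝ a).hasFDerivAt).mul (hquot.hasFDerivAt_comp_norm hx)).smul
        (innerSL ℝ (E := E)).hasFDerivAt)
  rw [iteratedFDeriv_two_apply, hfderiv.fderiv_eq, hsecond.fderiv]
  simp only [coe_innerSL_apply, Pi.mul_apply, mul_one, cons_val_zero, _root_.add_apply,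
    ContinuousLinearMap.smulRight_apply, _root_.smul_apply, real_inner_comm u, smul_eq_mul,
    cons_val_one, cons_val_fin_one]
  rw [innerSL_apply_apply, innerSL_apply_apply]
  field_simp
  ring

theorem hessianMatrix_apply_mul_comp_norm {N : ℕ} (hf' : ∀ r, 0 < r → HasDerivAt f' (f'' r) r)
    (k : Fin N) {x : EuclideanSpace ℝ (Fin N)} (hx : x ≠ 0) :
    hessianMatrix (fun y => y k * f ‖y‖) x
      = symmRankTwoUpdate (x k * f' ‖x‖ / ‖x‖) (x k * (f'' ‖x‖ - f' ‖x‖ / ‖x‖) / ‖x‖ ^ 2)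
          (f' ‖x‖ / ‖x‖) x.ofLp (Pi.single k 1) := by
  have hcoord : (fun y : EuclideanSpace ℝ (Fin N) => y k * f ‖y‖)
      = fun y => ⟪EuclideanSpace.single k 1, y⟫ * f ‖y‖ := by
    simp [EuclideanSpace.inner_single_left]
  ext i j
  rw [hessianMatrix, hcoord, iteratedFDeriv_two_inner_mul_comp_norm hf _ hf' hx]
  simp only [EuclideanSpace.inner_single_left, EuclideanSpace.inner_single_right,
    PiLp.single_apply, Pi.single_apply, Real.ringHom_apply, symmRankTwoUpdate, scalar_apply,
    Matrix.add_apply, Matrix.smul_apply, diagonal_apply, vecMulVec_apply, eq_comm (a := i),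
    smul_eq_mul]
  split_ifs <;> ring

end Radial

theorem sq_apply_div_norm_le_one {ι : Type*} [Fintype ι] (x : EuclideanSpace ℝ ι) (k : ι) :
    (x k / ‖x‖) ^ 2 ≤ 1 := by
  rw [div_pow]
  exact div_le_one_of_le₀ (sq_le_sq.2 (by simpa using PiLp.norm_apply_le x k)) (by positivity)

theorem charpoly_symmRankTwoUpdate_apply {N : ℕ} (hN : 2 ≤ N) {x : EuclideanSpace ℝ (Fin N)}
    (hx : x ≠ 0) (k : Fin N) (d b c : ℝ) :
    (symmRankTwoUpdate d (b / ‖x‖ ^ 2) (c / ‖x‖) x.ofLp (Pi.single k 1)).charpoly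
      = (X - C d) ^ (N - 2) * ((X - C d) ^ 2 - C (b + 2 * c * (x k / ‖x‖)) * (X - C d)
          - C (c ^ 2 * (1 - (x k / ‖x‖) ^ 2))) := by
  have hr : ‖x‖ ≠ 0 := norm_ne_zero_iff.2 hx
  rw [charpoly_symmRankTwoUpdate _ _ _ _ _ (by simpa using hN), Fintype.card_fin,
    show x.ofLp ⬝ᵥ x.ofLp = ‖x‖ ^ 2 from real_inner_self_eq_norm_sq x, dotProduct_single_one,
    single_one_dotProduct, Pi.single_eq_same,
    show b / ‖x‖ ^ 2 * ‖x‖ ^ 2 + 2 * (c / ‖x‖) * x k = b + 2 * c * (x k / ‖x‖) by field_simp,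
    show (c / ‖x‖) ^ 2 * (‖x‖ ^ 2 * 1 - x k ^ 2) = c ^ 2 * (1 - (x k / ‖x‖) ^ 2) by field_simp]

theorem statement19 (N : ℕ) (hN : 2 ≤ N)
    (f f' f'' : ℝ → ℝ)
    (hf' : ∀ r : ℝ, 0 < r → HasDerivAt f (f' r) r)
    (hf'' : ∀ r : ℝ, 0 < r → HasDerivAt f' (f'' r) r)
    (x : EuclideanSpace ℝ (Fin N))
    (hx : 0 < x ⟨N - 1, by omega⟩) :
    let lastIdx : Fin N := ⟨N - 1, by omega⟩
    let φ : EuclideanSpace ℝ (Fin N) → ℝ := fun y => y lastIdx * f ‖y‖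
    let b : ℝ := x lastIdx * (f'' ‖x‖ - f' ‖x‖ / ‖x‖)
    let c : ℝ := f' ‖x‖
    let d : ℝ := x lastIdx * f' ‖x‖ / ‖x‖
    let s : ℝ := x lastIdx / ‖x‖
    let A : Matrix (Fin N) (Fin N) ℝ := hessianMatrix φ x
    sortedEig A ⟨0, by omega⟩
        = d + (b + 2 * c * s
            - Real.sqrt ((b + 2 * c * s) ^ 2 + 4 * c ^ 2 * (1 - s ^ 2))) / 2 ∧
    (∀ i : Fin N, 0 < (i : ℕ) → (i : ℕ) < N - 1 → sortedEig A i = d) ∧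
    sortedEig A ⟨N - 1, by omega⟩
        = d + (b + 2 * c * s
            + Real.sqrt ((b + 2 * c * s) ^ 2 + 4 * c ^ 2 * (1 - s ^ 2))) / 2 ∧
    (∀ v : EuclideanSpace ℝ (Fin N),
      (inner ℝ v x : ℝ) = 0 → v lastIdx = 0 →
        A.mulVec (fun i => v i) = fun i => d * v i) := by
  intro lastIdx φ b c d s A
  have hx0 : x ≠ 0 := fun h => by simp [h] at hx
  have hA : A = symmRankTwoUpdate d (b / ‖x‖ ^ 2) (c / ‖x‖) x.ofLp (Pi.single lastIdx 1) :=
    hessianMatrix_apply_mul_comp_norm hf' hf'' lastIdx hx0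
  have hchar : A.charpoly = (X - C d) ^ (N - 2) * ((X - C d) ^ 2 - C (b + 2 * c * s) * (X - C d)
      - C (c ^ 2 * (1 - s ^ 2))) :=
    hA ▸ charpoly_symmRankTwoUpdate_apply hN hx0 lastIdx d b c
  have hD : 0 ≤ c ^ 2 * (1 - s ^ 2) :=
    mul_nonneg (sq_nonneg c) (sub_nonneg.2 (sq_apply_div_norm_le_one x lastIdx))
  have hsorted := sortedEig_eq_of_charpoly_eq_shifted_quadratic hN
    (hA ▸ isHermitian_iff_isSymm.2 (isSymm_symmRankTwoUpdate ..)) hD hchar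
  refine ⟨by simp [hsorted, mul_assoc], fun i hi0 hiN => by simp [hsorted, hi0.ne', hiN.ne],
    by simp [hsorted, mul_assoc, show N - 1 ≠ 0 by omega], fun v hvx hve => ?_⟩
  rw [hA]
  exact symmRankTwoUpdate_mulVec_of_dotProduct_eq_zero _ _ _ _ _ hvx (by simpa using hve)
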